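/- Let (X_ℓ)_{ℓ=1,…,L} be i.i.d. Gaussian random variables with mean 0 and variance ε² > 0, and let δ > 1. If L = 1 + ⌊log(ε^{-2})⌋, then P( Σ_{ℓ=1}^{L} X_ℓ² ≥ δ²ε²L ) ≤ ε^{(δ-1)²}. -/

import Mathlib

/-!
Chernoff's bound with `t = (1 - δ⁻²) / (2ε²)`, the parameter for which `E[exp (t X²)] = δ`
when `X ~ N(0, ε²)`, bounds the probability by `exp (-(δ² - 1) L / 2) δ^L`. Since
`δ ≤ exp (δ - 1)` this is at most `exp (-L (δ - 1)² / 2)`, and `L ≥ log ε⁻²` turns it into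
`ε ^ (δ - 1)²`.
-/

open MeasureTheory ProbabilityTheory Real NNReal

namespace ProbabilityTheory

variable {v : ℝ≥0} {t : ℝ}

lemma gaussianPDFReal_zero_mul_exp_mul_sq (hv : v ≠ 0) (x : ℝ) :
    gaussianPDFReal 0 v x * exp (t * x ^ 2)
      = (√(2 * π * v))⁻¹ * exp (-((1 - 2 * t * v) / (2 * v)) * x ^ 2) := by
  have hv' : (v : ℝ) ≠ 0 := by exact_mod_cast hv
  rw [gaussianPDFReal, mul_assoc, ← exp_add]
  congr 2
  field_simp
  ring

lemma integrable_exp_mul_sq_gaussianReal (hv : v ≠ 0) (ht : 2 * t * v < 1) :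
    Integrable (fun x ↦ exp (t * x ^ 2)) (gaussianReal 0 v) := by
  have hb : 0 < (1 - 2 * t * v) / (2 * v) := div_pos (by linarith) (by positivity)
  rw [gaussianReal_of_var_ne_zero _ hv,
    integrable_withDensity_iff_integrable_smul' (measurable_gaussianPDF _ _)
      (ae_of_all _ fun _ ↦ gaussianPDF_lt_top)]
  simp_rw [toReal_gaussianPDF, smul_eq_mul, gaussianPDFReal_zero_mul_exp_mul_sq hv]
  exact (integrable_exp_neg_mul_sq hb).const_mul _

lemma mgf_sq_gaussianReal (hv : v ≠ 0) (ht : 2 * t * v < 1) :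
    mgf (fun x ↦ x ^ 2) (gaussianReal 0 v) t = (√(1 - 2 * t * v))⁻¹ := by
  have hpos : 0 < 1 - 2 * t * v := by linarith
  rw [mgf, integral_gaussianReal_eq_integral_smul hv]
  simp_rw [smul_eq_mul, gaussianPDFReal_zero_mul_exp_mul_sq hv]
  rw [integral_const_mul, integral_gaussian, div_div_eq_mul_div,
    sqrt_div' _ hpos.le, ← mul_div_assoc, mul_comm π]
  have : √(2 * π * v) ≠ 0 := by positivity
  field_simp

variable {ι E : Type*} [Fintype ι] [MeasurableSpace E]

lemma integrable_exp_mul_sum_pi {μ : Measure E} [SigmaFinite μ] {f : E → ℝ}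
    (hf : Integrable (fun y ↦ exp (t * f y)) μ) :
    Integrable (fun x : ι → E ↦ exp (t * ∑ i, f (x i))) (Measure.pi fun _ ↦ μ) := by
  simp_rw [Finset.mul_sum, exp_sum]
  exact Integrable.fintype_prod (f := fun _ ↦ fun y ↦ exp (t * f y)) fun _ ↦ hf

lemma mgf_sum_pi (μ : Measure E) [SigmaFinite μ] (f : E → ℝ) :
    mgf (fun x : ι → E ↦ ∑ i, f (x i)) (Measure.pi fun _ ↦ μ) t
      = mgf f μ t ^ Fintype.card ι := by
  simp_rw [mgf, Finset.mul_sum, exp_sum]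
  exact integral_fintype_prod_eq_pow fun y ↦ exp (t * f y)

theorem measureReal_sum_sq_ge_le_exp (hv : v ≠ 0) {δ : ℝ} (hδ : 1 ≤ δ) :
    (Measure.pi fun _ : ι ↦ gaussianReal 0 v).real
        {x | δ ^ 2 * v * Fintype.card ι ≤ ∑ i, x i ^ 2}
      ≤ exp (-(Fintype.card ι * (δ - 1) ^ 2 / 2)) := by
  have hδ0 : 0 < δ := by linarith
  set n := Fintype.card ι
  set t := (1 - δ⁻¹ ^ 2) / (2 * v) with ht
  have htv : 1 - 2 * t * v = δ⁻¹ ^ 2 := by rw [ht]; field_simp; ring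
  have ht0 : 0 ≤ t :=
    div_nonneg (by nlinarith [inv_le_one_of_one_le₀ hδ, inv_pos.2 hδ0]) (by positivity)
  have ht1 : 2 * t * v < 1 := by nlinarith [inv_pos.2 hδ0]
  have hmgf : mgf (fun y ↦ y ^ 2) (gaussianReal 0 v) t = δ := by
    rw [mgf_sq_gaussianReal hv ht1, htv, sqrt_sq (by positivity), inv_inv]
  calc _ ≤ exp (-t * (δ ^ 2 * v * n)) * mgf (fun x : ι → ℝ ↦ ∑ i, x i ^ 2)
          (Measure.pi fun _ ↦ gaussianReal 0 v) t :=
        measure_ge_le_exp_mul_mgf _ ht0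
          (integrable_exp_mul_sum_pi (integrable_exp_mul_sq_gaussianReal hv ht1))
    _ = exp (-((δ ^ 2 - 1) * n / 2)) * δ ^ n := by
        rw [mgf_sum_pi _ (fun y ↦ y ^ 2), hmgf, ht]
        congr 2
        field_simp
    _ ≤ exp (-((δ ^ 2 - 1) * n / 2)) * exp (δ - 1) ^ n := by
        gcongr
        linarith [add_one_le_exp (δ - 1)]
    _ = exp (-(n * (δ - 1) ^ 2 / 2)) := by
        rw [← exp_nat_mul, ← exp_add]
        ring_nf

lemma exp_neg_mul_half_le_rpow {ε a c : ℝ} (hε : 0 < ε) (ha : -2 * log ε ≤ a) (hc : 0 ≤ c) :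
    exp (-(a * c / 2)) ≤ ε ^ c := by
  rw [rpow_def_of_pos hε, exp_le_exp]
  nlinarith

end ProbabilityTheory

theorem stmt2_general (ε δ : ℝ) (hε : 0 < ε) (hδ : 1 < δ)
    (L : ℕ) (hL : L = 1 + ⌊Real.log (ε ^ (-2 : ℝ))⌋₊) :
    (Measure.pi (fun _ : Fin L => gaussianReal 0 ⟨ε ^ 2, sq_nonneg ε⟩))
        {x | δ ^ 2 * ε ^ 2 * L ≤ ∑ ℓ : Fin L, (x ℓ) ^ 2}
      ≤ ENNReal.ofReal (ε ^ ((δ - 1) ^ 2)) := by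
  set v : ℝ≥0 := ⟨ε ^ 2, sq_nonneg ε⟩
  have hv : v ≠ 0 := NNReal.coe_ne_zero.mp (pow_ne_zero 2 hε.ne')
  have hL_le : -2 * log ε ≤ L := by
    rw [← log_rpow hε, hL, Nat.cast_add, Nat.cast_one, add_comm]
    exact (Nat.lt_floor_add_one _).le
  have htail := measureReal_sum_sq_ge_le_exp (ι := Fin L) hv hδ.le
  rw [Fintype.card_fin] at htail
  rw [ENNReal.le_ofReal_iff_toReal_le (measure_ne_top _ _) (by positivity)]
  exact htail.trans (exp_neg_mul_half_le_rpow hε hL_le (sq_nonneg _))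

/-- Large deviation inequality (Lemma 2). If `X_1,…,X_L` are i.i.d.
`N(0,ε²)` with `L = 1 + ⌊log(ε^{-2})⌋` and `δ > 1`, then
`P(Σ X_ℓ² ≥ δ²ε²L) ≤ ε^{(δ-1)²}`. -/
theorem stmt2 (ε δ : ℝ) (hε : 0 < ε) (hε1 : ε < 1) (hδ : 1 < δ)
    (L : ℕ) (hL : L = 1 + ⌊Real.log (ε ^ (-2 : ℝ))⌋₊) :
    (Measure.pi (fun _ : Fin L => gaussianReal 0 ⟨ε ^ 2, sq_nonneg ε⟩))
        {x | δ ^ 2 * ε ^ 2 * L ≤ ∑ ℓ : Fin L, (x ℓ) ^ 2}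
      ≤ ENNReal.ofReal (ε ^ ((δ - 1) ^ 2)) :=
  stmt2_general ε δ hε hδ L hL
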